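/- Let n be an odd positive integer. Then the wreath product (Z/nZ) ≀ (Z/2Z) is isomorphic as a group to the direct product (Z/nZ) × D_n. Explicitly, writing elements of (Z/nZ) ≀ (Z/2Z) as triples (2a, 2b, ε) with a, b ∈ Z/nZ and ε ∈ Z/2Z, the map Φ(2a, 2b, ε) = (a + b, σ^{a-b} τ^{ε}) is a well-defined group isomorphism onto (Z/nZ) × D_n. -/

import Mathlib

/-! Swapping the two coordinates of `(u, v) ∈ (ℤ/nℤ)²` fixes `u + v` and negates `u - v`, just as
conjugation by the reflection `τ = sr 0` inverts the rotations `r k` of `Dₙ`. Hence for every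
`c : ℤ/nℤ` the map `(u, v, ε) ↦ (c (u + v), r (c (u - v)) τ^ε)` is a homomorphism. If `c` and `2`
are units its kernel is trivial, and both groups have order `2n²`; `c = 1/2` gives `Φ`. -/

noncomputable section

/-- The permutation action of `G` on `⊕_{g ∈ G} H`: `(σ • x)_g = x_{σ⁻¹ g}`. -/
def wreathAction (H G : Type*) [Group H] [Group G] : G →* MulAut (G → H) where
  toFun g := MulEquiv.arrowCongr (Equiv.mulLeft g) (MulEquiv.refl H)
  map_one' := by
    ext x g
    simp [MulEquiv.arrowCongr]
    rfl
  map_mul' := by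
    intro a b
    ext x g
    simp [MulEquiv.arrowCongr, mul_assoc, Equiv.Perm.mul_def, Equiv.mulLeft]

/-- The wreath product `H ≀ G = (⊕_{g ∈ G} H) ⋊ G`. -/
abbrev WreathProduct (H G : Type*) [Group H] [Group G] : Type _ :=
  SemidirectProduct (G → H) G (wreathAction H G)

/-- The element `(u, v)` of `⊕_{g ∈ ℤ/2ℤ} (ℤ/nℤ)`: the function on `ℤ/2ℤ` with value `u` at
`0` and `v` at `1`. -/
def wreathPair (n : ℕ) (u v : ZMod n) :
    Multiplicative (ZMod 2) → Multiplicative (ZMod n) :=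
  fun t => if Multiplicative.toAdd t = 0 then Multiplicative.ofAdd u else Multiplicative.ofAdd v

open Multiplicative DihedralGroup

theorem ZMod.isUnit_two_of_odd {n : ℕ} (hn : Odd n) : IsUnit (2 : ZMod n) := by
  simpa using (ZMod.isUnit_iff_coprime 2 n).mpr (Nat.coprime_two_left.mpr hn)

theorem Multiplicative.zmod_two_eq_one_or_eq_ofAdd_one (t : Multiplicative (ZMod 2)) :
    t = 1 ∨ t = ofAdd 1 := by
  revert t; decide

theorem wreathAction_apply (H G : Type*) [Group H] [Group G] (g : G) (x : G → H) (t : G) :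
    wreathAction H G g x t = x (g⁻¹ * t) := rfl

section

variable {n : ℕ}

theorem wreathPair_eta (x : Multiplicative (ZMod 2) → Multiplicative (ZMod n)) :
    wreathPair n (toAdd (x 1)) (toAdd (x (ofAdd 1))) = x := by
  funext t
  rcases t.zmod_two_eq_one_or_eq_ofAdd_one with rfl | rfl <;> rfl

def DihedralGroup.reflectionHom : Multiplicative (ZMod 2) →* DihedralGroup n where
  toFun ε := if toAdd ε = 0 then 1 else sr 0
  map_one' := rfl
  map_mul' a b := by
    rcases a.zmod_two_eq_one_or_eq_ofAdd_one with rfl | rfl <;>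
      rcases b.zmod_two_eq_one_or_eq_ofAdd_one with rfl | rfl <;>
      simp [← ofAdd_add, show (1 : ZMod 2) + 1 = 0 from rfl]

theorem DihedralGroup.reflectionHom_ofAdd (ε : ZMod 2) :
    reflectionHom (ofAdd ε) = if ε = 0 then (1 : DihedralGroup n) else sr 0 := rfl

def wreathBaseToProdDihedral (c : ZMod n) :
    (Multiplicative (ZMod 2) → Multiplicative (ZMod n)) →*
      Multiplicative (ZMod n) × DihedralGroup n where
  toFun x := (ofAdd (c * (toAdd (x 1) + toAdd (x (ofAdd 1)))),
    r (c * (toAdd (x 1) - toAdd (x (ofAdd 1)))))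
  map_one' := by simp
  map_mul' x y := by
    simp only [Pi.mul_apply, toAdd_mul, Prod.mk_mul_mk, r_mul_r, ← ofAdd_add]
    congr 2 <;> ring

def wreathToProdDihedral (c : ZMod n) :
    WreathProduct (Multiplicative (ZMod n)) (Multiplicative (ZMod 2)) →*
      Multiplicative (ZMod n) × DihedralGroup n :=
  SemidirectProduct.lift (wreathBaseToProdDihedral c) ((MonoidHom.inr _ _).comp reflectionHom) <| by
    intro g
    ext x : 1
    rcases g.zmod_two_eq_one_or_eq_ofAdd_one with rfl | rfl
    · simp [reflectionHom, ← Prod.one_eq_mk]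
    · simp only [wreathBaseToProdDihedral, reflectionHom, MonoidHom.comp_apply,
        MulEquiv.coe_toMonoidHom, MonoidHom.coe_mk, OneHom.coe_mk, wreathAction_apply,
        MulAut.conj_apply, MonoidHom.inr_apply, show (ofAdd (1 : ZMod 2))⁻¹ = ofAdd 1 from rfl,
        show ofAdd (1 : ZMod 2) * ofAdd 1 = 1 from rfl, mul_one, one_mul, toAdd_eq_zero,
        ofAdd_eq_one, one_ne_zero, ↓reduceIte, Prod.mk_mul_mk, Prod.inv_mk, inv_one, inv_sr,
        sr_mul_r, sr_mul_sr, zero_add, zero_sub, Prod.mk.injEq, EmbeddingLike.apply_eq_iff_eq,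
        r.injEq]
      constructor <;> ring

theorem wreathToProdDihedral_mk (c u v : ZMod n) (ε : Multiplicative (ZMod 2)) :
    wreathToProdDihedral c ⟨wreathPair n u v, ε⟩ =
      (ofAdd (c * (u + v)), r (c * (u - v)) * reflectionHom ε) := by
  simp [wreathToProdDihedral, wreathBaseToProdDihedral, wreathPair]

theorem wreathToProdDihedral_injective {c : ZMod n} (hc : IsUnit c) (h2 : IsUnit (2 : ZMod n)) :
    Function.Injective (wreathToProdDihedral c) := by
  rw [injective_iff_map_eq_one]
  rintro ⟨x, ε⟩ h
  rw [← wreathPair_eta x, wreathToProdDihedral_mk, Prod.mk_eq_one] at h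
  obtain ⟨hsum, hdiff⟩ := h
  rcases ε.zmod_two_eq_one_or_eq_ofAdd_one with rfl | rfl
  · rw [map_one reflectionHom, mul_one, ← r_zero, r.injEq, hc.mul_right_eq_zero] at hdiff
    rw [ofAdd_eq_one, hc.mul_right_eq_zero] at hsum
    have hu : toAdd (x 1) = 0 :=
      h2.mul_right_eq_zero.mp (by linear_combination hsum + hdiff)
    have hv : toAdd (x (ofAdd 1)) = 0 :=
      h2.mul_right_eq_zero.mp (by linear_combination hsum - hdiff)
    refine SemidirectProduct.ext ?_ rfl
    rw [← wreathPair_eta x, hu, hv]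
    funext t
    simp [wreathPair]
  · rw [reflectionHom_ofAdd, if_neg one_ne_zero, r_mul_sr] at hdiff
    nomatch hdiff.trans one_def

theorem wreathToProdDihedral_bijective [NeZero n] {c : ZMod n} (hc : IsUnit c)
    (h2 : IsUnit (2 : ZMod n)) : Function.Bijective (wreathToProdDihedral c) := by
  refine (wreathToProdDihedral_injective hc h2).bijective_of_nat_card_le (le_of_eq ?_)
  rw [SemidirectProduct.card, Nat.card_prod, Nat.card_fun, DihedralGroup.nat_card]
  simp only [Nat.card_eq_fintype_card, Fintype.card_multiplicative, ZMod.card]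
  ring

end

theorem wreath_product_cyclic_two_iso_dihedral_general (n : ℕ) (hn : Odd n) :
    ∃ Φ : WreathProduct (Multiplicative (ZMod n)) (Multiplicative (ZMod 2)) ≃*
        Multiplicative (ZMod n) × DihedralGroup n,
      ∀ (a b : ZMod n) (ε : ZMod 2),
        Φ ⟨wreathPair n (2 * a) (2 * b), Multiplicative.ofAdd ε⟩ =
          (Multiplicative.ofAdd (a + b),
            if ε = 0 then DihedralGroup.r (a - b) else DihedralGroup.sr (b - a)) := by
  have : NeZero n := ⟨hn.pos.ne'⟩
  have h2 := ZMod.isUnit_two_of_odd hn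
  have half : (↑h2.unit⁻¹ : ZMod n) * 2 = 1 := h2.val_inv_mul
  refine ⟨.ofBijective _ (wreathToProdDihedral_bijective (Units.isUnit h2.unit⁻¹) h2),
    fun a b ε => ?_⟩
  have hsum : ↑h2.unit⁻¹ * (2 * a + 2 * b) = a + b := by linear_combination (a + b) * half
  have hdiff : ↑h2.unit⁻¹ * (2 * a - 2 * b) = a - b := by linear_combination (a - b) * half
  rw [MulEquiv.ofBijective_apply, wreathToProdDihedral_mk, hsum, hdiff, reflectionHom_ofAdd]
  split_ifs <;> simp [r_mul_sr]

/-- For odd `n`, the wreath product `(ℤ/nℤ) ≀ (ℤ/2ℤ)` is isomorphic to `(ℤ/nℤ) × Dₙ` via the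
map `Φ(2a, 2b, ε) = (a + b, σ^{a-b} τ^ε)`, where `σ = r 1` and `τ = sr 0` in the dihedral
group `Dₙ` of order `2n` (so `σ^{a-b} = r (a-b)` and `σ^{a-b} τ = sr (b-a)`). -/
theorem wreath_product_cyclic_two_iso_dihedral (n : ℕ) (hn : Odd n) (hpos : 0 < n) :
    ∃ Φ : WreathProduct (Multiplicative (ZMod n)) (Multiplicative (ZMod 2)) ≃*
        Multiplicative (ZMod n) × DihedralGroup n,
      ∀ (a b : ZMod n) (ε : ZMod 2),
        Φ ⟨wreathPair n (2 * a) (2 * b), Multiplicative.ofAdd ε⟩ =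
          (Multiplicative.ofAdd (a + b),
            if ε = 0 then DihedralGroup.r (a - b) else DihedralGroup.sr (b - a)) :=
  wreath_product_cyclic_two_iso_dihedral_general n hn
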